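/- arXiv:1601.04213 — 4 statements merged into one kernel-verified Lean document; each statement's English description precedes it below -/
import Mathlib

section
/- For positive integers m, w with w ≤ m, the quantity m + Σ_{1≤z≤m, 1≤j≤w} j · 2^{w−j+1} · C(z, j)·C(m−z, w−j)/C(m, w) equals ((m+1)/(w+1))·(2^{w+2} − 2w − 4) + m. -/
/-!
After swapping the two sums, the inner sum over `z` is the upper-index Chu–Vandermonde identity
`∑ z, C(z, j) C(m - z, w - j) = C(m + 1, w + 1)`, which does not depend on `j`, and
`C(m + 1, w + 1) / C(m, w) = (m + 1) / (w + 1)`. What remains is the arithmetico-geometric sum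
`∑ j ∈ [1, w], j 2^(w - j + 1) = 2^(w + 2) - 2w - 4`.
-/

open Finset

namespace Nat

theorem sum_range_choose_eq_choose_succ (m a : ℕ) :
    ∑ z ∈ range (m + 1), z.choose a = (m + 1).choose (a + 1) := by
  rw [← sum_Icc_choose, range_eq_Ico, Ico_add_one_right_eq_Icc]
  refine (sum_subset (Icc_subset_Icc_left a.zero_le) fun z hz hza => ?_).symm
  exact choose_eq_zero_of_lt (by simp_all)

theorem sum_range_choose_mul_choose_sub (m a b : ℕ) :
    ∑ z ∈ range (m + 1), z.choose a * (m - z).choose b = (m + 1).choose (a + b + 1) := by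
  induction m generalizing b with
  | zero => cases a <;> cases b <;> simp [choose_succ_succ, ← Nat.add_assoc]
  | succ m ih =>
    cases b with
    | zero => simpa using sum_range_choose_eq_choose_succ (m + 1) a
    | succ b =>
      have pascal : ∀ z ∈ range (m + 1), z.choose a * (m + 1 - z).choose (b + 1) =
          z.choose a * (m - z).choose b + z.choose a * (m - z).choose (b + 1) := by
        intro z hz
        rw [show m + 1 - z = m - z + 1 by grind, choose_succ_succ, Nat.mul_add]
      rw [sum_range_succ, Nat.sub_self, choose_zero_succ, Nat.mul_zero, Nat.add_zero,
        sum_congr rfl pascal, sum_add_distrib, ih, ih,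
        show a + (b + 1) + 1 = a + b + 1 + 1 by ring, choose_succ_succ' (m + 1)]

theorem sum_Icc_choose_mul_choose_sub {j : ℕ} (hj : 1 ≤ j) (m k : ℕ) :
    ∑ z ∈ Icc 1 m, z.choose j * (m - z).choose k = (m + 1).choose (j + k + 1) := by
  rw [← sum_range_choose_mul_choose_sub, range_eq_Ico,
    sum_eq_sum_Ico_succ_bot (by omega : 0 < m + 1), Nat.zero_add, Ico_add_one_right_eq_Icc,
    choose_eq_zero_of_lt hj, Nat.zero_mul, Nat.zero_add]

end Nat

theorem sum_Icc_mul_two_pow (w : ℕ) :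
    ∑ j ∈ Icc 1 w, (j : ℚ) * 2 ^ (w - j + 1) = 2 ^ (w + 2) - 2 * (w : ℚ) - 4 := by
  induction w with
  | zero => norm_num
  | succ w ih =>
    have doubling : ∀ j ∈ Icc 1 w,
        (j : ℚ) * 2 ^ (w + 1 - j + 1) = 2 * ((j : ℚ) * 2 ^ (w - j + 1)) := by
      intro j hj
      rw [show w + 1 - j + 1 = w - j + 1 + 1 by grind, pow_succ]
      ring
    rw [sum_Icc_succ_top (by omega), sum_congr rfl doubling, ← mul_sum, ih, Nat.sub_self]
    push_cast
    ring

theorem cast_choose_succ_succ_div_choose {m w : ℕ} (h : w ≤ m) :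
    ((m + 1).choose (w + 1) : ℚ) / m.choose w = ((m : ℚ) + 1) / ((w : ℚ) + 1) := by
  have hc : (m.choose w : ℚ) ≠ 0 := by exact_mod_cast (Nat.choose_pos h).ne'
  rw [div_eq_div_iff hc (by positivity)]
  exact_mod_cast (Nat.add_one_mul_choose_eq m w).symm

theorem avg_steps_closed_form_general (m w : ℕ) (hwm : w ≤ m) :
    (m : ℚ) + ∑ z ∈ Finset.Icc 1 m, ∑ j ∈ Finset.Icc 1 w,
        (j : ℚ) * 2 ^ (w - j + 1) * (Nat.choose z j : ℚ) * (Nat.choose (m - z) (w - j) : ℚ)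
          / (Nat.choose m w : ℚ)
      = ((m : ℚ) + 1) / ((w : ℚ) + 1) * (2 ^ (w + 2) - 2 * (w : ℚ) - 4) + (m : ℚ) := by
  have inner : ∀ j ∈ Icc 1 w, ∑ z ∈ Icc 1 m,
      (j : ℚ) * 2 ^ (w - j + 1) * (z.choose j : ℚ) * ((m - z).choose (w - j) : ℚ) / m.choose w
        = ((m : ℚ) + 1) / ((w : ℚ) + 1) * ((j : ℚ) * 2 ^ (w - j + 1)) := by
    intro j hj
    obtain ⟨hj1, hjw⟩ := mem_Icc.mp hj
    have vandermonde : ∑ z ∈ Icc 1 m, (z.choose j : ℚ) * ((m - z).choose (w - j) : ℚ)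
        = ((m + 1).choose (w + 1) : ℚ) := by
      rw [← Nat.add_sub_of_le hjw, Nat.add_sub_cancel_left]
      exact_mod_cast Nat.sum_Icc_choose_mul_choose_sub hj1 m (w - j)
    calc _ = (j : ℚ) * 2 ^ (w - j + 1)
          * (∑ z ∈ Icc 1 m, (z.choose j : ℚ) * ((m - z).choose (w - j) : ℚ))
          / m.choose w := by
          rw [mul_sum, sum_div]
          exact sum_congr rfl fun z _ => by ring
      _ = _ := by rw [vandermonde, mul_div_assoc, cast_choose_succ_succ_div_choose hwm, mul_comm]
  rw [sum_comm, sum_congr rfl inner, ← mul_sum, sum_Icc_mul_two_pow, add_comm]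

/-- Closed form of the average step count for a query with `w` uniformly random wildcards
in a complete bitwise trie on `m`-bit keys. -/
theorem avg_steps_closed_form (m w : ℕ) (hw : 1 ≤ w) (hwm : w ≤ m) :
    (m : ℚ) + ∑ z ∈ Finset.Icc 1 m, ∑ j ∈ Finset.Icc 1 w,
        (j : ℚ) * 2 ^ (w - j + 1) * (Nat.choose z j : ℚ) * (Nat.choose (m - z) (w - j) : ℚ)
          / (Nat.choose m w : ℚ)
      = ((m : ℚ) + 1) / ((w : ℚ) + 1) * (2 ^ (w + 2) - 2 * (w : ℚ) - 4) + (m : ℚ) :=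
  avg_steps_closed_form_general m w hwm
end

section
/- Let T(m, 0) = m and T(m, w) ≤ T(m, w−1) + z_w + T(z_w, w−1) for any sequence of positions 1 ≤ z_1 ≤ ⋯ ≤ z_w ≤ m (where T(z_w, w−1) denotes the bound for the query restricted to the low z_w bits with wildcards z_1,…,z_{w−1}). Then T(m, w) ≤ m + Σ_{j=1}^{w} 2^{w−j+1}·z_j. -/
/-!
Unfolding the recursion once at the top wildcard `z_{b+1}` bounds both recursive calls by the
bound for `b` wildcards: the first because `z_1, …, z_b ≤ a`, the second because
`z_1, …, z_b ≤ z_{b+1}`. So the excess of `T a b` over `a` is at most `wildcardCost z b`, the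
solution of `c (b + 1) = 2 (z_{b+1} + c b)`, `c 0 = 0`, which is `∑_{j ≤ b} 2^{b-j+1} z_j`.
-/

def wildcardCost (z : ℕ → ℕ) : ℕ → ℕ
  | 0 => 0
  | b + 1 => 2 * (z (b + 1) + wildcardCost z b)

theorem wildcardCost_eq_sum (z : ℕ → ℕ) (b : ℕ) :
    wildcardCost z b = ∑ j ∈ Finset.Icc 1 b, 2 ^ (b - j + 1) * z j := by
  induction b with
  | zero => rfl
  | succ b ih =>
    have hshift : ∀ j ∈ Finset.Icc 1 b, 2 ^ (b + 1 - j + 1) * z j = 2 * (2 ^ (b - j + 1) * z j) := by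
      intro j hj
      rw [show b + 1 - j + 1 = (b - j + 1) + 1 by grind, pow_succ]
      ring
    rw [wildcardCost, ih, Finset.sum_Icc_succ_top (by omega), Finset.sum_congr rfl hshift,
      ← Finset.mul_sum, Nat.sub_self]
    ring

theorem le_add_wildcardCost {w : ℕ} {z : ℕ → ℕ} {T : ℕ → ℕ → ℕ}
    (hmono : ∀ i j, 1 ≤ i → i ≤ j → j ≤ w → z i ≤ z j)
    (hT0 : ∀ a, T a 0 = a)
    (hTrec : ∀ a b, 1 ≤ b → b ≤ w → z b ≤ a →
      T a b ≤ T a (b - 1) + z b + T (z b) (b - 1)) :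
    ∀ b ≤ w, ∀ a, (∀ j, 1 ≤ j → j ≤ b → z j ≤ a) → T a b ≤ a + wildcardCost z b := by
  intro b
  induction b with
  | zero => intro _ a _; simp [hT0, wildcardCost]
  | succ b ih =>
    intro hbw a ha
    have hunfold : T a (b + 1) ≤ T a b + z (b + 1) + T (z (b + 1)) b :=
      hTrec a (b + 1) (by omega) hbw (ha (b + 1) (by omega) le_rfl)
    have hfirst : T a b ≤ a + wildcardCost z b :=
      ih (by omega) a fun j hj hjb => ha j hj (by omega)
    have hsecond : T (z (b + 1)) b ≤ z (b + 1) + wildcardCost z b :=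
      ih (by omega) _ fun j hj hjb => hmono j (b + 1) hj (by omega) hbw
    rw [wildcardCost]
    omega

theorem T_le_s_hat_general (m w : ℕ) (z : ℕ → ℕ) (T : ℕ → ℕ → ℕ)
    (hmono : ∀ i j, 1 ≤ i → i ≤ j → j ≤ w → z i ≤ z j)
    (hzm : z w ≤ m)
    (hT0 : ∀ a, T a 0 = a)
    (hTrec : ∀ a b, 1 ≤ b → b ≤ w → z b ≤ a →
      T a b ≤ T a (b - 1) + z b + T (z b) (b - 1)) :
    T m w ≤ m + ∑ j ∈ Finset.Icc 1 w, 2 ^ (w - j + 1) * z j := by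
  rw [← wildcardCost_eq_sum]
  exact le_add_wildcardCost hmono hT0 hTrec w le_rfl m
    fun j hj hjw => (hmono j w hj hjw le_rfl).trans hzm

/-- If the step count `T` of the naive backtracking algorithm satisfies `T(m, 0) = m` and
`T(m, w) ≤ T(m, w−1) + z_w + T(z_w, w−1)` for wildcard positions `z_1 ≤ ⋯ ≤ z_w ≤ m`,
then `T(m, w) ≤ m + ∑_{j=1}^{w} 2^{w−j+1}·z_j`. -/
theorem T_le_s_hat (m w : ℕ) (z : ℕ → ℕ) (T : ℕ → ℕ → ℕ)
    (hmono : ∀ i j, 1 ≤ i → i ≤ j → j ≤ w → z i ≤ z j)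
    (hz1 : ∀ j, 1 ≤ j → j ≤ w → 1 ≤ z j)
    (hzm : z w ≤ m)
    (hT0 : ∀ a, T a 0 = a)
    (hTrec : ∀ a b, 1 ≤ b → b ≤ w → z b ≤ a →
      T a b ≤ T a (b - 1) + z b + T (z b) (b - 1)) :
    T m w ≤ m + ∑ j ∈ Finset.Icc 1 w, 2 ^ (w - j + 1) * z j :=
  T_le_s_hat_general m w z T hmono hzm hT0 hTrec
end

section
/- Let 1 ≤ w ≤ m and let Z = {z_1 < z_2 < ⋯ < z_w} be a uniformly random w-element subset of {1,…,m}. Then E[m + Σ_{j=1}^{w} 2^{w−j+1}·z_j] = ((m+1)/(w+1))·(2^{w+2} − 2w − 4) + m. -/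
/-!
Swap the sums. The `w`-subsets of `{1, …, m}` whose `j`-th smallest element is `z` number
`C(z-1, j-1) · C(m-z, w-j)`, and `z · C(z-1, j-1) = j · C(z, j)`. Classifying the
`(w+1)`-subsets of `{0, …, m}` by their `(j+1)`-th element gives
`∑_z C(z, j) · C(m-z, w-j) = C(m+1, w+1)`, so `∑_Z z_j = j · C(m+1, w+1)`, i.e.
`E[z_j] = j (m+1)/(w+1)`. It remains to sum `∑_j 2^(w-j+1) · j = 2^(w+2) - 2w - 4`.
-/

open Finset

namespace Finset

variable {α : Type*} [LinearOrder α]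

section Split

variable {A B : Finset α} {z : α}

lemma filter_lt_insert_union (hA : ∀ a ∈ A, a < z) (hB : ∀ b ∈ B, z < b) :
    {y ∈ insert z (A ∪ B) | y < z} = A := by
  rw [filter_insert, if_neg (lt_irrefl z), filter_union, filter_true_of_mem hA,
    filter_false_of_mem fun b hb => (hB b hb).asymm, union_empty]

lemma filter_gt_insert_union (hA : ∀ a ∈ A, a < z) (hB : ∀ b ∈ B, z < b) :
    {y ∈ insert z (A ∪ B) | z < y} = B := by
  rw [filter_insert, if_neg (lt_irrefl z), filter_union, filter_true_of_mem hB,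
    filter_false_of_mem fun a ha => (hA a ha).asymm, empty_union]

lemma filter_le_insert_union (hA : ∀ a ∈ A, a < z) (hB : ∀ b ∈ B, z < b) :
    {y ∈ insert z (A ∪ B) | y ≤ z} = insert z A := by
  rw [filter_insert, if_pos le_rfl, filter_union, filter_true_of_mem fun a ha => (hA a ha).le,
    filter_false_of_mem fun b hb => not_le.mpr (hB b hb), union_empty]

lemma card_insert_union (hA : ∀ a ∈ A, a < z) (hB : ∀ b ∈ B, z < b) :
    #(insert z (A ∪ B)) = #A + #B + 1 := by
  have hdisj : Disjoint A B :=
    disjoint_left.mpr fun y hyA hyB => lt_asymm (hA y hyA) (hB y hyB)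
  have hz : z ∉ A ∪ B := by
    simp only [mem_union, not_or]
    exact ⟨fun h => lt_irrefl z (hA z h), fun h => lt_irrefl z (hB z h)⟩
  rw [card_insert_of_notMem hz, card_union_of_disjoint hdisj]

lemma insert_filter_lt_union_filter_gt {Z : Finset α} (hz : z ∈ Z) :
    insert z ({y ∈ Z | y < z} ∪ {y ∈ Z | z < y}) = Z := by
  ext y
  simp only [mem_insert, mem_union, mem_filter]
  rcases lt_trichotomy y z with h | rfl | h <;> aesop

end Split

lemma card_filter_le_eq_card_filter_lt_add_one {Z : Finset α} {z : α} (hz : z ∈ Z) :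
    #{y ∈ Z | y ≤ z} = #{y ∈ Z | y < z} + 1 := by
  conv_lhs => rw [← insert_filter_lt_union_filter_gt hz]
  rw [filter_le_insert_union (fun _ h => (mem_filter.mp h).2) (fun _ h => (mem_filter.mp h).2),
    card_insert_of_notMem (by simp)]

lemma card_eq_card_filter_lt_add_card_filter_gt {Z : Finset α} {z : α} (hz : z ∈ Z) :
    #Z = #{y ∈ Z | y < z} + #{y ∈ Z | z < y} + 1 := by
  conv_lhs => rw [← insert_filter_lt_union_filter_gt hz]
  exact card_insert_union (fun _ h => (mem_filter.mp h).2) (fun _ h => (mem_filter.mp h).2)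

/-- A `Z` counted on the left is `insert z (A ∪ B)` for an `i`-subset `A` of the elements of `s` below `z`
and a `k`-subset `B` of those above it. -/
theorem card_filter_rank_eq (s : Finset α) {z : α} (hz : z ∈ s) (i k : ℕ) :
    #{Z ∈ s.powersetCard (i + k + 1) | z ∈ Z ∧ #{y ∈ Z | y ≤ z} = i + 1}
      = (#{y ∈ s | y < z}).choose i * (#{y ∈ s | z < y}).choose k := by
  rw [← card_powersetCard, ← card_powersetCard, ← card_product]
  refine card_nbij' (fun Z => ({y ∈ Z | y < z}, {y ∈ Z | z < y}))
    (fun P => insert z (P.1 ∪ P.2)) ?_ ?_ ?_ ?_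
  · rintro Z hZ
    simp only [mem_coe, mem_filter, mem_powersetCard] at hZ
    obtain ⟨⟨hZs, hZcard⟩, hzZ, hrank⟩ := hZ
    rw [card_filter_le_eq_card_filter_lt_add_one hzZ] at hrank
    rw [card_eq_card_filter_lt_add_card_filter_gt hzZ] at hZcard
    simp only [mem_coe, mem_product, mem_powersetCard]
    exact ⟨⟨filter_subset_filter _ hZs, by omega⟩, filter_subset_filter _ hZs, by omega⟩
  · rintro ⟨A, B⟩ hP
    simp only [mem_coe, mem_product, mem_powersetCard] at hP
    obtain ⟨⟨hAs, hAcard⟩, hBs, hBcard⟩ := hP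
    have hA : ∀ a ∈ A, a < z := fun a ha => (mem_filter.mp (hAs ha)).2
    have hB : ∀ b ∈ B, z < b := fun b hb => (mem_filter.mp (hBs hb)).2
    simp only [mem_coe, mem_filter, mem_powersetCard]
    refine ⟨⟨insert_subset hz (union_subset (hAs.trans (filter_subset _ _))
      (hBs.trans (filter_subset _ _))), ?_⟩, mem_insert_self z _, ?_⟩
    · rw [card_insert_union hA hB, hAcard, hBcard]
    · rw [filter_le_insert_union hA hB, card_insert_of_notMem fun h => lt_irrefl z (hA z h),
        hAcard]
  · rintro Z hZ
    exact insert_filter_lt_union_filter_gt (mem_filter.mp hZ).2.1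
  · rintro ⟨A, B⟩ hP
    simp only [mem_coe, mem_product, mem_powersetCard] at hP
    have hA : ∀ a ∈ A, a < z := fun a ha => (mem_filter.mp (hP.1.1 ha)).2
    have hB : ∀ b ∈ B, z < b := fun b hb => (mem_filter.mp (hP.2.1 hb)).2
    exact Prod.ext (filter_lt_insert_union hA hB) (filter_gt_insert_union hA hB)

lemma strictMonoOn_card_filter_le (Z : Finset α) : StrictMonoOn (fun z => #{y ∈ Z | y ≤ z}) Z := by
  intro a _ b hb hab
  refine card_lt_card ((ssubset_iff_of_subset fun y hy => ?_).mpr ⟨b, ?_, fun hba => ?_⟩)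
  · simp only [mem_filter] at hy ⊢
    exact ⟨hy.1, hy.2.trans hab.le⟩
  · exact mem_filter.mpr ⟨hb, le_rfl⟩
  · exact (mem_filter.mp hba).2.not_gt hab

lemma card_filter_card_filter_le_eq_one (Z : Finset α) {j : ℕ} (hj : j ∈ Icc 1 #Z) :
    #{z ∈ Z | #{y ∈ Z | y ≤ z} = j} = 1 := by
  have hinj := (strictMonoOn_card_filter_le Z).injOn
  have himage : Z.image (fun z => #{y ∈ Z | y ≤ z}) = Icc 1 #Z := by
    refine eq_of_subset_of_card_le (fun n hn => ?_) ?_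
    · obtain ⟨z, hz, rfl⟩ := mem_image.mp hn
      exact mem_Icc.mpr ⟨card_pos.mpr ⟨z, mem_filter.mpr ⟨hz, le_rfl⟩⟩, card_filter_le _ _⟩
    · rw [card_image_of_injOn hinj, Nat.card_Icc, add_tsub_cancel_right]
  obtain ⟨z, hz, rfl⟩ := mem_image.mp (himage ▸ hj)
  refine card_eq_one.mpr ⟨z, ext fun y => ?_⟩
  simp only [mem_filter, mem_singleton]
  exact ⟨fun ⟨hy, hyz⟩ => hinj hy hz hyz, by rintro rfl; exact ⟨hz, rfl⟩⟩

theorem sum_card_filter_rank_eq_choose (s : Finset α) {j n : ℕ} (hj : j ∈ Icc 1 n) :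
    ∑ z ∈ s, #{Z ∈ s.powersetCard n | z ∈ Z ∧ #{y ∈ Z | y ≤ z} = j} = (#s).choose n := by
  rw [← card_powersetCard, card_eq_sum_ones]
  refine (sum_card_bipartiteAbove_eq_sum_card_bipartiteBelow
    (r := fun z Z => z ∈ Z ∧ #{y ∈ Z | y ≤ z} = j)).trans (sum_congr rfl fun Z hZ => ?_)
  obtain ⟨hZs, hZcard⟩ := mem_powersetCard.mp hZ
  rw [← card_filter_card_filter_le_eq_one Z (hZcard ▸ hj), bipartiteBelow, ← filter_filter,
    filter_mem_eq_inter, inter_eq_right.mpr hZs]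

end Finset

theorem Nat.sum_range_choose_mul_choose (n i k : ℕ) :
    ∑ z ∈ range (n + 1), z.choose i * (n - z).choose k = (n + 1).choose (i + k + 1) := by
  have hcount := sum_card_filter_rank_eq_choose (range (n + 1)) (j := i + 1) (n := i + k + 1)
    (mem_Icc.mpr ⟨le_add_self, by omega⟩)
  rw [card_range] at hcount
  rw [← hcount]
  refine sum_congr rfl fun z hz => ?_
  have hbelow : {y ∈ range (n + 1) | y < z} = range z := by
    ext y; simp only [mem_filter, mem_range] at hz ⊢; omega
  have habove : {y ∈ range (n + 1) | z < y} = Ioc z n := by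
    ext y; simp only [mem_filter, mem_range, mem_Ioc]; omega
  rw [card_filter_rank_eq _ hz, hbelow, habove, card_range, Nat.card_Ioc]

theorem sum_powersetCard_Icc_sum_rank_eq (m : ℕ) {j w : ℕ} (hj : j ∈ Icc 1 w) :
    ∑ Z ∈ (Icc 1 m).powersetCard w, ∑ z ∈ Z with #{y ∈ Z | y ≤ z} = j, z
      = j * (m + 1).choose (w + 1) := by
  obtain ⟨hj1, hjw⟩ := mem_Icc.mp hj
  obtain ⟨i, rfl⟩ : ∃ i, j = i + 1 := ⟨j - 1, by omega⟩
  obtain ⟨k, rfl⟩ : ∃ k, w = i + k + 1 := ⟨w - (i + 1), by omega⟩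
  rw [sum_comm' (t' := Icc 1 m)
    (s' := fun z => {Z ∈ (Icc 1 m).powersetCard (i + k + 1) | z ∈ Z ∧ #{y ∈ Z | y ≤ z} = i + 1})
    fun Z z => ?_]
  · simp_rw [sum_const, smul_eq_mul]
    calc ∑ z ∈ Icc 1 m, #{Z ∈ (Icc 1 m).powersetCard (i + k + 1) |
            z ∈ Z ∧ #{y ∈ Z | y ≤ z} = i + 1} * z
        = ∑ z ∈ Icc 1 m, (i + 1) * (z.choose (i + 1) * (m - z).choose k) := by
          refine sum_congr rfl fun z hz => ?_
          obtain ⟨z, rfl⟩ : ∃ z', z = z' + 1 := ⟨z - 1, by simp only [mem_Icc] at hz; omega⟩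
          have hbelow : {y ∈ Icc 1 m | y < z + 1} = Icc 1 z := by
            ext y; simp only [mem_filter, mem_Icc] at hz ⊢; omega
          have habove : {y ∈ Icc 1 m | z + 1 < y} = Ioc (z + 1) m := by
            ext y; simp only [mem_filter, mem_Icc, mem_Ioc]; omega
          rw [card_filter_rank_eq _ hz, hbelow, habove, Nat.card_Icc, Nat.card_Ioc,
            add_tsub_cancel_right, mul_comm, ← mul_assoc, Nat.add_one_mul_choose_eq]
          ring
      _ = (i + 1) * ∑ z ∈ range (m + 1), z.choose (i + 1) * (m - z).choose k := by
          rw [← mul_sum]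
          congr 1
          refine sum_subset (fun z hz => ?_) fun z hz hz' => ?_
          · simp only [mem_Icc, mem_range] at hz ⊢; omega
          · obtain rfl : z = 0 := by simp only [mem_Icc, mem_range] at hz hz'; omega
            simp
      _ = (i + 1) * (m + 1).choose (i + k + 1 + 1) := by
          rw [Nat.sum_range_choose_mul_choose, add_right_comm i 1 k]
  · simp only [mem_filter, mem_powersetCard]
    constructor
    · rintro ⟨⟨hZs, hZcard⟩, hz, hrank⟩
      exact ⟨⟨⟨hZs, hZcard⟩, hz, hrank⟩, hZs hz⟩
    · rintro ⟨⟨⟨hZs, hZcard⟩, hz, hrank⟩, -⟩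
      exact ⟨⟨hZs, hZcard⟩, hz, hrank⟩

theorem sum_Icc_two_pow_mul (w : ℕ) :
    ∑ j ∈ Icc 1 w, (2 : ℚ) ^ (w - j + 1) * j = 2 ^ (w + 2) - 2 * w - 4 := by
  induction w with
  | zero => norm_num
  | succ w ih =>
    have hshift : ∀ j ∈ Icc 1 w, (2 : ℚ) ^ (w + 1 - j + 1) * j = 2 * (2 ^ (w - j + 1) * j) := by
      intro j hj
      rw [Nat.sub_add_comm (mem_Icc.mp hj).2, pow_succ]
      ring
    rw [sum_Icc_succ_top (Nat.le_add_left 1 w), sum_congr rfl hshift, ← mul_sum, ih,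
      Nat.sub_self]
    push_cast
    ring

theorem expected_s_hat_general (m w : ℕ) (hwm : w ≤ m) :
    (∑ Z ∈ (Finset.Icc 1 m).powersetCard w,
        ((m : ℚ) + ∑ j ∈ Finset.Icc 1 w, 2 ^ (w - j + 1) *
          ∑ z ∈ Z.filter (fun z => (Z.filter (fun y => y ≤ z)).card = j), (z : ℚ)))
        / (Nat.choose m w : ℚ)
      = ((m : ℚ) + 1) / ((w : ℚ) + 1) * (2 ^ (w + 2) - 2 * (w : ℚ) - 4) + (m : ℚ) := by
  have hrank (j : ℕ) (hj : j ∈ Icc 1 w) :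
      ∑ Z ∈ (Icc 1 m).powersetCard w, ∑ z ∈ Z with #{y ∈ Z | y ≤ z} = j, (z : ℚ)
        = j * (m + 1).choose (w + 1) := by
    simpa only [Nat.cast_sum, Nat.cast_mul] using
      congrArg (Nat.cast (R := ℚ)) (sum_powersetCard_Icc_sum_rank_eq m hj)
  have hchoose : ((m : ℚ) + 1) * m.choose w = (m + 1).choose (w + 1) * (w + 1) := by
    exact_mod_cast Nat.add_one_mul_choose_eq m w
  have hpos : (m.choose w : ℚ) ≠ 0 := by exact_mod_cast (Nat.choose_pos hwm).ne'
  rw [sum_add_distrib, sum_const, card_powersetCard, Nat.card_Icc, add_tsub_cancel_right,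
    nsmul_eq_mul, sum_comm]
  simp_rw [← mul_sum]
  rw [sum_congr rfl fun j hj => congrArg _ (hrank j hj)]
  simp_rw [← mul_assoc, ← sum_mul, sum_Icc_two_pow_mul]
  field_simp
  linear_combination (4 + 2 * (w : ℚ) - 2 ^ (w + 2)) * hchoose

/-- For a uniformly random `w`-element subset `Z = {z_1 < ⋯ < z_w}` of `{1,…,m}`,
`E[m + ∑_{j=1}^{w} 2^{w−j+1}·z_j] = ((m+1)/(w+1))·(2^{w+2} − 2w − 4) + m`.
(The `j`-th smallest element `z_j` of `Z` is the unique `z ∈ Z` with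
`|{y ∈ Z : y ≤ z}| = j`.) -/
theorem expected_s_hat (m w : ℕ) (hw : 1 ≤ w) (hwm : w ≤ m) :
    (∑ Z ∈ (Finset.Icc 1 m).powersetCard w,
        ((m : ℚ) + ∑ j ∈ Finset.Icc 1 w, 2 ^ (w - j + 1) *
          ∑ z ∈ Z.filter (fun z => (Z.filter (fun y => y ≤ z)).card = j), (z : ℚ)))
        / (Nat.choose m w : ℚ)
      = ((m : ℚ) + 1) / ((w : ℚ) + 1) * (2 ^ (w + 2) - 2 * (w : ℚ) - 4) + (m : ℚ) :=
  expected_s_hat_general m w hwm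
end

section
/- Let k ≥ 2, 1 ≤ w ≤ m, and let Z = {z_1 < ⋯ < z_w} be a uniformly random w-element subset of {1,…,m}. Then E[m + Σ_{j=1}^{w} 2·k^{w−j}·(k−1)·z_j] = m + (2(m+1)/(w+1))·(k^{w+1} − (w+1)k + w)/(k−1). -/
/-!
Summed over all `w`-subsets `Z` of `{1,…,m}`, the `j`-th smallest element `z_j` totals
`j · C(m+1, w+1)`: induct on `m`, splitting on whether `m + 1 ∈ Z` (if so, it is the largest
element), and close with Pascal's rule. As `(m+1) · C(m,w) = (w+1) · C(m+1,w+1)`, the mean of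
`z_j` is `j (m+1)/(w+1)`, so the expectation reduces to the weighted geometric sum
`(k-1)² ∑_{j=1}^{w} j k^{w-j} = k^{w+1} - (w+1) k + w`.
-/

open Finset

lemma Finset.sum_powersetCard_succ_insert {α β : Type*} [DecidableEq α] [AddCommMonoid β]
    {a : α} {s : Finset α} (ha : a ∉ s) (n : ℕ) (f : Finset α → β) :
    ∑ t ∈ (insert a s).powersetCard (n + 1), f t =
      ∑ t ∈ s.powersetCard (n + 1), f t + ∑ t ∈ s.powersetCard n, f (insert a t) := by
  rw [powersetCard_succ_insert ha, sum_union, sum_image]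
  · exact insert_erase_invOn.2.injOn.mono fun t ht ↦ notMem_mono (mem_powersetCard.1 ht).1 ha
  · aesop (add simp [disjoint_left, insert_subset_iff])

/-- The `j`-th smallest element of `Z`, written as in the theorem: the filter holds at most the one
element of rank `j`, so this is `0` when `j = 0` or `#Z < j`. -/
def orderStat (Z : Finset ℕ) (j : ℕ) : ℕ :=
  ∑ z ∈ Z.filter (fun z => (Z.filter (fun y => y ≤ z)).card = j), z

lemma orderStat_eq_zero_of_card_lt {Z : Finset ℕ} {j : ℕ} (h : Z.card < j) :
    orderStat Z j = 0 :=
  sum_eq_zero fun _ hz => absurd (mem_filter.1 hz).2 (((card_filter_le _ _).trans_lt h).ne)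

lemma orderStat_empty (j : ℕ) : orderStat ∅ j = 0 := rfl

lemma orderStat_insert_of_forall_lt {a : ℕ} {Z : Finset ℕ} (ha : ∀ z ∈ Z, z < a) (j : ℕ) :
    orderStat (insert a Z) j = (if Z.card + 1 = j then a else 0) + orderStat Z j := by
  have haZ : a ∉ Z := fun h => (ha a h).false
  have hrank_a : (insert a Z).filter (fun y => y ≤ a) = insert a Z :=
    filter_true_of_mem fun y hy => (mem_insert.1 hy).elim le_of_eq fun h => (ha y h).le
  have hrank : ∀ z ∈ Z, (insert a Z).filter (fun y => y ≤ z) = Z.filter (fun y => y ≤ z) :=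
    fun z hz => by rw [filter_insert, if_neg (ha z hz).not_ge]
  unfold orderStat
  rw [sum_filter, sum_filter, sum_insert haZ, hrank_a, card_insert_of_notMem haZ,
    sum_congr rfl fun z hz => by rw [hrank z hz]]

theorem sum_orderStat_powersetCard_Icc (m : ℕ) {w j : ℕ} (hj : j ≤ w) :
    ∑ Z ∈ (Icc 1 m).powersetCard w, orderStat Z j = j * (m + 1).choose (w + 1) := by
  induction m generalizing w j with
  | zero =>
    obtain _ | w := w
    · simp_all [orderStat_empty]
    · simp [Nat.choose_eq_zero_of_lt]
  | succ m ih =>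
    obtain _ | v := w
    · simp_all [orderStat_empty]
    have hinsert : ∑ Z ∈ (Icc 1 m).powersetCard v, orderStat (insert (m + 1) Z) j =
        j * (m + 1).choose (v + 1) := by
      rw [sum_congr rfl fun Z hZ => by
          rw [orderStat_insert_of_forall_lt (fun z hz => Nat.lt_succ_of_le
            (mem_Icc.1 ((mem_powersetCard.1 hZ).1 hz)).2), (mem_powersetCard.1 hZ).2],
        sum_add_distrib, sum_const, card_powersetCard, Nat.card_Icc, Nat.add_sub_cancel,
        smul_eq_mul]
      rcases hj.lt_or_eq with hj | rfl
      · rw [if_neg hj.ne', ih (Nat.le_of_lt_succ hj)]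
        simp
      · rw [if_pos rfl, sum_eq_zero fun Z hZ => orderStat_eq_zero_of_card_lt
          ((mem_powersetCard.1 hZ).2 ▸ Nat.lt_succ_self v), add_zero]
        linarith [Nat.add_one_mul_choose_eq m v]
    rw [← insert_Icc_right_eq_Icc_add_one (Nat.le_add_left 1 m),
      sum_powersetCard_succ_insert (by simp), ih hj, hinsert, Nat.choose_succ_succ (m + 1) (v + 1)]
    ring

theorem sub_one_sq_mul_sum_Icc_mul_pow {R : Type*} [CommRing R] (x : R) (w : ℕ) :
    (x - 1) ^ 2 * ∑ j ∈ Icc 1 w, (j : R) * x ^ (w - j) = x ^ (w + 1) - (w + 1) * x + w := by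
  induction w with
  | zero => simp
  | succ w ih =>
    have hshift : ∑ j ∈ Icc 1 w, (j : R) * x ^ (w + 1 - j) =
        x * ∑ j ∈ Icc 1 w, (j : R) * x ^ (w - j) := by
      rw [mul_sum]
      refine sum_congr rfl fun j hj => ?_
      rw [Nat.sub_add_comm (mem_Icc.1 hj).2, pow_succ]
      ring
    rw [sum_Icc_succ_top (by omega), hshift, Nat.sub_self, pow_zero]
    push_cast
    linear_combination x * ih

theorem expected_s_hat_kary_general (m w k : ℕ) (hwm : w ≤ m) :
    (∑ Z ∈ (Finset.Icc 1 m).powersetCard w,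
        ((m : ℚ) + ∑ j ∈ Finset.Icc 1 w, 2 * (k : ℚ) ^ (w - j) * ((k : ℚ) - 1) *
          ∑ z ∈ Z.filter (fun z => (Z.filter (fun y => y ≤ z)).card = j), (z : ℚ)))
        / (Nat.choose m w : ℚ)
      = (m : ℚ) + 2 * ((m : ℚ) + 1) / ((w : ℚ) + 1)
          * ((k : ℚ) ^ (w + 1) - ((w : ℚ) + 1) * (k : ℚ) + (w : ℚ)) / ((k : ℚ) - 1) := by
  set S := ∑ j ∈ Icc 1 w, (j : ℚ) * (k : ℚ) ^ (w - j)
  have hrank (j : ℕ) (hj : j ∈ Icc 1 w) : ∑ Z ∈ (Icc 1 m).powersetCard w,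
      ∑ z ∈ Z.filter (fun z => (Z.filter (fun y => y ≤ z)).card = j), (z : ℚ) =
        j * (m + 1).choose (w + 1) := by
    simpa [orderStat] using
      congrArg (Nat.cast (R := ℚ)) (sum_orderStat_powersetCard_Icc m (mem_Icc.1 hj).2)
  have htotal : ∑ Z ∈ (Icc 1 m).powersetCard w,
      ((m : ℚ) + ∑ j ∈ Icc 1 w, 2 * (k : ℚ) ^ (w - j) * ((k : ℚ) - 1) *
        ∑ z ∈ Z.filter (fun z => (Z.filter (fun y => y ≤ z)).card = j), (z : ℚ)) =
      m.choose w * m + 2 * (k - 1) * (m + 1).choose (w + 1) * S := by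
    rw [sum_add_distrib, sum_const, card_powersetCard, Nat.card_Icc, Nat.add_sub_cancel,
      nsmul_eq_mul, sum_comm, mul_sum]
    congr 1
    refine sum_congr rfl fun j hj => ?_
    rw [← mul_sum, hrank j hj]
    ring
  have hchoose : ((m : ℚ) + 1) * m.choose w = (w + 1) * (m + 1).choose (w + 1) := by
    exact_mod_cast (Nat.add_one_mul_choose_eq m w).trans (mul_comm _ _)
  have hC : (m.choose w : ℚ) ≠ 0 := Nat.cast_ne_zero.2 (Nat.choose_pos hwm).ne'
  have hgeom : ((k : ℚ) - 1) ^ 2 * S = (k : ℚ) ^ (w + 1) - ((w : ℚ) + 1) * k + w :=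
    sub_one_sq_mul_sum_Icc_mul_pow (k : ℚ) w
  have hcancel : ((k : ℚ) - 1) ^ 2 * S / ((k : ℚ) - 1) = ((k : ℚ) - 1) * S := by
    rw [mul_div_right_comm, sq, mul_self_div_self]
  rw [htotal, ← hgeom, mul_div_assoc (2 * ((m : ℚ) + 1) / ((w : ℚ) + 1)), hcancel]
  field_simp
  linear_combination (-2 * ((k : ℚ) - 1) * S) * hchoose

/-- For `k ≥ 2` and a uniformly random `w`-element subset `Z = {z_1 < ⋯ < z_w}` of `{1,…,m}`,
`E[m + ∑_{j=1}^{w} 2·k^{w−j}·(k−1)·z_j] = m + (2(m+1)/(w+1))·(k^{w+1} − (w+1)k + w)/(k−1)`. -/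
theorem expected_s_hat_kary (m w k : ℕ) (hk : 2 ≤ k) (hw : 1 ≤ w) (hwm : w ≤ m) :
    (∑ Z ∈ (Finset.Icc 1 m).powersetCard w,
        ((m : ℚ) + ∑ j ∈ Finset.Icc 1 w, 2 * (k : ℚ) ^ (w - j) * ((k : ℚ) - 1) *
          ∑ z ∈ Z.filter (fun z => (Z.filter (fun y => y ≤ z)).card = j), (z : ℚ)))
        / (Nat.choose m w : ℚ)
      = (m : ℚ) + 2 * ((m : ℚ) + 1) / ((w : ℚ) + 1)
          * ((k : ℚ) ^ (w + 1) - ((w : ℚ) + 1) * (k : ℚ) + (w : ℚ)) / ((k : ℚ) - 1) :=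
  expected_s_hat_kary_general m w k hwm
end
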